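/- arXiv:2003.06710 — 2 statements merged into one kernel-verified Lean document; each statement's English description precedes it below -/
import Mathlib

section
/- If w ∈ S_n does not lie in any proper standard parabolic subgroup (i.e., its support is all of {s_1,...,s_{n-1}}), then for every u of length 1 in [e,w], the number of elements of [e,w] covering u is at most n. -/
namespace SG

variable {α : Type*} [LinearOrder α] [Fintype α]

/-- The length (number of inversions) of a permutation. -/
noncomputable def len (w : Equiv.Perm α) : ℕ :=
  Set.ncard {p : α × α | p.1 < p.2 ∧ w p.2 < w p.1}

/-- One step of the Bruhat order: multiply by a transposition, increasing length. -/
def lt1 (u v : Equiv.Perm α) : Prop :=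
  (∃ i j : α, i ≠ j ∧ v = u * Equiv.swap i j) ∧ len u < len v

/-- The (strong) Bruhat order. -/
def le (u v : Equiv.Perm α) : Prop := Relation.ReflTransGen lt1 u v

/-- `covers u v` means `v` covers `u` in Bruhat order: `u ≤ v` and `ℓ(u) + 1 = ℓ(v)`. -/
def covers (u v : Equiv.Perm α) : Prop := le u v ∧ len u + 1 = len v

/-- `(i, j)` is a minimal inversion of `w`. -/
def MinimalInversion (w : Equiv.Perm α) (i j : α) : Prop :=
  i < j ∧ w j < w i ∧ ¬ ∃ k, i < k ∧ k < j ∧ w j < w k ∧ w k < w i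

/-- `w` contains the pattern given by the values `π 0, …, π (m-1)`. -/
def Contains (w : Equiv.Perm α) {m : ℕ} (π : Fin m → ℕ) : Prop :=
  ∃ f : Fin m → α, StrictMono f ∧ ∀ a b : Fin m, π a < π b ↔ w (f a) < w (f b)

def Avoids (w : Equiv.Perm α) {m : ℕ} (π : Fin m → ℕ) : Prop := ¬ Contains w π

/-- The set of elements of length `k` in the Bruhat interval `[e, w]`. -/
def Pk (w : Equiv.Perm α) (k : ℕ) : Set (Equiv.Perm α) := {u | le u w ∧ len u = k}

/-- The number of elements of `[e, w]` covering `u`. -/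
noncomputable def udeg (w u : Equiv.Perm α) : ℕ := {v | le v w ∧ covers u v}.ncard

/-- The number of elements of `[e, w]` covered by `u`. -/
noncomputable def ddeg (w u : Equiv.Perm α) : ℕ := {v | le v w ∧ covers v u}.ncard

end SG

/-!
A permutation of length one is an adjacent transposition `s = (c c')`, and a cover of `s`
is `s * (a b)` with `a < b` and exactly two inversions. If some `k` lies strictly between
`a` and `b`, then `(a b)` has the three inversions `(a, k)`, `(k, b)`, `(a, b)`, while
composing with `s` reverses only the pair of positions carrying the values `c, c'`; so that
pair is one of the three, which forces `(a b) = (c, c' + 1)` or `(a b) = (c - 1, c')`.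
Otherwise `(a b)` is one of the other adjacent transpositions. Over `Fin (n + 1)` there are
`n` adjacent pairs, so `s` has at most `(n - 1) + 2` covers.
-/

open SG Equiv

namespace SG

variable {α : Type*} [LinearOrder α]

lemma len_le_len_of_le {u v : Perm α} (h : le u v) : len u ≤ len v := by
  induction h with
  | refl => exact le_rfl
  | tail _ hstep ih => exact ih.trans hstep.2.le

lemma exists_lt_eq_mul_swap_of_covers {u v : Perm α} (h : covers u v) :
    ∃ a b : α, a < b ∧ v = u * swap a b := by
  obtain ⟨hle, hlen⟩ := h
  rcases Relation.ReflTransGen.cases_head hle with rfl | ⟨m, ⟨⟨a, b, hab, rfl⟩, hum⟩, hmv⟩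
  · omega
  rcases Relation.ReflTransGen.cases_head hmv with hv | ⟨m', hm', hm'v⟩
  · rcases hab.lt_or_gt with h | h
    · exact ⟨a, b, h, hv.symm⟩
    · exact ⟨b, a, h, by rw [← hv, swap_comm]⟩
  · have := len_le_len_of_le hm'v
    have := hm'.2
    omega

lemma card_le_len [Finite α] {v : Perm α} (s : Finset (α × α))
    (hs : ∀ p ∈ s, p.1 < p.2 ∧ v p.2 < v p.1) : s.card ≤ len v := by
  rw [← Set.ncard_coe_finset]
  exact Set.ncard_le_ncard (fun p hp => hs p hp) (Set.toFinite _)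

lemma strictMono_of_len_eq_zero [Finite α] {v : Perm α} (h : len v = 0) : StrictMono v :=
  fun x y hxy => lt_of_not_ge fun hle =>
    ((Set.ncard_eq_zero (Set.toFinite _)).mp h).subset
      (show (x, y) ∈ {p : α × α | p.1 < p.2 ∧ v p.2 < v p.1} from
        ⟨hxy, hle.lt_of_ne (v.injective.ne hxy.ne')⟩)

lemma eq_one_of_len_eq_zero [Finite α] {v : Perm α} (h : len v = 0) : v = 1 := by
  have hv := strictMono_of_len_eq_zero h
  have hinv : StrictMono ⇑v⁻¹ := fun x y hxy => hv.lt_iff_lt.mp (by simpa using hxy)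
  ext x
  exact le_antisymm (by simpa using hinv.id_le (v x)) (hv.id_le x)

lemma swap_lt_swap_of_covBy {c c' z y : α} (hcc : c ⋖ c') (hzy : z < y)
    (hne : ¬(z = c ∧ y = c')) : swap c c' z < swap c c' y := by
  have hz : c' ≤ z ∨ z ≤ c := (lt_or_ge z c').symm.imp_right hcc.le_of_lt
  have hy : y ≤ c ∨ c' ≤ y := (le_or_gt y c).imp_right hcc.ge_of_gt
  have := hcc.lt
  simp only [swap_apply_def]
  rcases not_and_or.mp hne with hne | hne <;> rcases hz with hz | hz <;>
    rcases hy with hy | hy <;> split_ifs <;> order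

lemma len_one : len (1 : Perm α) = 0 := by
  have : {p : α × α | p.1 < p.2 ∧ p.2 < p.1} = ∅ :=
    Set.eq_empty_of_forall_notMem fun p hp => hp.1.asymm hp.2
  simp [len, this]

lemma exists_covBy_eq_swap_of_len_eq_one [Finite α] {u : Perm α} (h : len u = 1) :
    ∃ c c' : α, c ⋖ c' ∧ u = swap c c' := by
  obtain ⟨⟨c, c'⟩, hp⟩ := Set.ncard_eq_one.mp h
  have honly : ∀ x y, x < y → u y < u x → x = c ∧ y = c' := fun x y hxy huxy => by
    simpa using hp.subset (show (x, y) ∈ {p : α × α | p.1 < p.2 ∧ u p.2 < u p.1} from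
      ⟨hxy, huxy⟩)
  obtain ⟨hlt, hinv⟩ : c < c' ∧ u c' < u c := hp.symm.subset rfl
  have hcc : c ⋖ c' := by
    refine ⟨hlt, fun k hck hkc' => ?_⟩
    rcases lt_or_gt_of_ne (u.injective.ne hck.ne' : u k ≠ u c) with hk | hk
    · exact hkc'.ne (honly c k hck hk).2
    · exact hck.ne' (honly k c' hkc' (hinv.trans hk)).1
  refine ⟨c, c', hcc, ?_⟩
  have hzero : len (u * swap c c') = 0 := by
    refine (Set.ncard_eq_zero (Set.toFinite _)).mpr (Set.eq_empty_of_forall_notMem ?_)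
    rintro ⟨x, y⟩ ⟨hxy, hu⟩
    by_cases hxy' : x = c ∧ y = c'
    · obtain ⟨rfl, rfl⟩ := hxy'
      simp only [Perm.mul_apply, swap_apply_left, swap_apply_right] at hu
      exact hu.asymm hinv
    · obtain ⟨hx, hy⟩ := honly _ _ (swap_lt_swap_of_covBy hcc hxy hxy') hu
      rw [swap_apply_eq_iff, swap_apply_left] at hx
      rw [swap_apply_eq_iff, swap_apply_right] at hy
      subst hx hy
      exact hxy.asymm hlt
  have := eq_one_of_len_eq_zero hzero
  rwa [mul_eq_one_iff_eq_inv, swap_inv] at this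

lemma middle_eq_of_len_swap_mul_swap_eq_two [Finite α] {a b c c' k : α} (hcc : c ⋖ c')
    (hak : a < k) (hkb : k < b) (hlen : len (swap c c' * swap a b) = 2) :
    (k = c ∧ b = c') ∨ (a = c ∧ k = c') := by
  by_contra hne
  have hka : swap a b k = k := swap_apply_of_ne_of_ne hak.ne' hkb.ne
  have hcard : ({(a, k), (k, b), (a, b)} : Finset (α × α)).card = 3 :=
    Finset.card_eq_three.mpr ⟨_, _, _, by simp [hkb.ne], by simp [hkb.ne], by simp [hak.ne'],
      rfl⟩
  have := card_le_len (v := swap c c' * swap a b) {(a, k), (k, b), (a, b)} <| by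
    simp only [Finset.mem_insert, Finset.mem_singleton, Perm.mul_apply]
    rintro p (rfl | rfl | rfl)
    · refine ⟨hak, swap_lt_swap_of_covBy hcc ?_ ?_⟩ <;> simp_all
    · refine ⟨hkb, swap_lt_swap_of_covBy hcc ?_ ?_⟩ <;> simp_all
    · refine ⟨hak.trans hkb, swap_lt_swap_of_covBy hcc ?_ ?_⟩
      · simpa using hak.trans hkb
      · rintro ⟨hac, hbc'⟩
        simp only [swap_apply_left, swap_apply_right] at hac hbc'
        exact hcc.2 (hac ▸ hak) (hbc' ▸ hkb)
  omega

lemma covBy_of_len_swap_mul_swap_eq_two [Finite α] {a b c c' : α} (hcc : c ⋖ c')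
    (hab : a < b) (hnab : ¬a ⋖ b) (hlen : len (swap c c' * swap a b) = 2) :
    (a = c ∧ c' ⋖ b) ∨ (b = c' ∧ a ⋖ c) := by
  have hmid : ∀ k, a < k → k < b → (k = c ∧ b = c') ∨ (a = c ∧ k = c') :=
    fun k hak hkb => middle_eq_of_len_swap_mul_swap_eq_two hcc hak hkb hlen
  obtain ⟨k, hak, hkb⟩ := exists_lt_lt_of_not_covBy hab hnab
  rcases hmid k hak hkb with ⟨rfl, rfl⟩ | ⟨rfl, rfl⟩
  · refine Or.inr ⟨rfl, hak, fun j haj hjk => ?_⟩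
    rcases hmid j haj (hjk.trans hkb) with ⟨rfl, -⟩ | ⟨rfl, -⟩
    · exact hjk.ne rfl
    · exact hak.ne rfl
  · refine Or.inl ⟨rfl, hkb, fun j hkj hjb => ?_⟩
    rcases hmid j (hak.trans hkj) hjb with ⟨rfl, -⟩ | ⟨-, rfl⟩
    · exact (hak.trans hkj).ne rfl
    · exact hkj.ne rfl

lemma ncard_covers_le_of_len_eq_one [Finite α] {u : Perm α} (hu : len u = 1) :
    {v | covers u v}.ncard ≤ {p : α × α | p.1 ⋖ p.2}.ncard + 1 := by
  obtain ⟨c, c', hcc, rfl⟩ := exists_covBy_eq_swap_of_len_eq_one hu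
  set adj := {p : α × α | p.1 ⋖ p.2}
  set extendRight := {p : α × α | p.1 = c ∧ c' ⋖ p.2}
  set extendLeft := {p : α × α | p.2 = c' ∧ p.1 ⋖ c}
  have hsub : {v | covers (swap c c') v} ⊆ (fun p : α × α => swap c c' * swap p.1 p.2) ''
      (adj \ {(c, c')} ∪ (extendRight ∪ extendLeft)) := by
    intro v hv
    obtain ⟨a, b, hab, rfl⟩ := exists_lt_eq_mul_swap_of_covers hv
    have hlen : len (swap c c' * swap a b) = 2 := by rw [← hv.2, hu]
    refine ⟨(a, b), ?_, rfl⟩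
    by_cases hadj : a ⋖ b
    · refine Or.inl ⟨hadj, fun hcc' => ?_⟩
      obtain ⟨rfl, rfl⟩ := Prod.mk.inj (Set.mem_singleton_iff.mp hcc')
      rw [swap_mul_self, len_one] at hlen
      omega
    · exact Or.inr (covBy_of_len_swap_mul_swap_eq_two hcc hab hadj hlen)
  have hright : extendRight.ncard ≤ 1 := Set.ncard_le_one_iff_subsingleton.mpr
    fun p hp q hq => Prod.ext (hp.1.trans hq.1.symm) (hp.2.unique_right hq.2)
  have hleft : extendLeft.ncard ≤ 1 := Set.ncard_le_one_iff_subsingleton.mpr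
    fun p hp q hq => Prod.ext (hp.2.unique_left hq.2) (hp.1.trans hq.1.symm)
  have hdiff := Set.ncard_sdiff_singleton_add_one (show (c, c') ∈ adj from hcc)
  have hcovers := Set.ncard_le_ncard hsub (Set.toFinite _)
  have himage := Set.ncard_image_le (f := fun p : α × α => swap c c' * swap p.1 p.2)
    (s := adj \ {(c, c')} ∪ (extendRight ∪ extendLeft)) (Set.toFinite _)
  have hunion := Set.ncard_union_le (adj \ {(c, c')}) (extendRight ∪ extendLeft)
  have hunion' := Set.ncard_union_le extendRight extendLeft
  omega

lemma ncard_covBy_fin_le (n : ℕ) : {p : Fin (n + 1) × Fin (n + 1) | p.1 ⋖ p.2}.ncard ≤ n := by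
  have hsub : {p : Fin (n + 1) × Fin (n + 1) | p.1 ⋖ p.2} ⊆
      Set.range fun i : Fin n => (i.castSucc, i.succ) := by
    rintro ⟨x, y⟩ hxy
    have hy : (x : ℕ) + 1 = y := by simpa using hxy
    exact ⟨⟨x, by omega⟩, Prod.ext (Fin.ext rfl) (Fin.ext hy)⟩
  calc _ ≤ _ := Set.ncard_le_ncard hsub (Set.toFinite _)
    _ = n := by
      rw [Set.ncard_range_of_injective fun i j h => Fin.castSucc_injective n (congrArg Prod.fst h),
        Nat.card_eq_fintype_card, Fintype.card_fin]

end SG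

theorem stmt15_general {n : ℕ} (w : Equiv.Perm (Fin (n + 1))) :
    ∀ u ∈ Pk w 1, udeg w u ≤ n + 1 := by
  rintro u ⟨-, hu⟩
  calc udeg w u ≤ {v | covers u v}.ncard := Set.ncard_le_ncard (fun v hv => hv.2) (Set.toFinite _)
    _ ≤ {p : Fin (n + 1) × Fin (n + 1) | p.1 ⋖ p.2}.ncard + 1 :=
      ncard_covers_le_of_len_eq_one hu
    _ ≤ n + 1 := Nat.add_le_add_right (ncard_covBy_fin_le n) 1

theorem stmt15 {n : ℕ} (w : Equiv.Perm (Fin (n + 1)))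
    (hsupp : ∀ i : Fin n, le (Equiv.swap i.castSucc i.succ) w) :
    ∀ u ∈ Pk w 1, udeg w u ≤ n + 1 :=
  stmt15_general w
end

section
/- Let w ∈ S_n be smooth (avoiding 3412 and 4231). If (i_1,j_1) and (i_2,j_2) are distinct minimal inversions of w, then there exists v ∈ [e,w] that is covered in Bruhat order by both w·t_{i_1 j_1} and w·t_{i_2 j_2}. -/
open SG Equiv
open SG Equiv

namespace SGAux

variable {n : ℕ}

def F (i j : Fin n) (p : Fin n × Fin n) : Fin n × Fin n :=
  if p.2 = i then (p.1, j)
  else if p.1 = j then (i, p.2)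
  else if p.2 = j ∧ p.1 < i then (p.1, i)
  else if p.1 = i ∧ j < p.2 then (j, p.2)
  else p

lemma F1 {i j a b : Fin n} (h : b = i) : F i j (a, b) = (a, j) := by simp [F, h]
lemma F2 {i j a b : Fin n} (hb : b ≠ i) (ha : a = j) : F i j (a, b) = (i, b) := by
  simp [F, hb, ha]
lemma F3 {i j a b : Fin n} (hb : b ≠ i) (ha : a ≠ j) (h : b = j) (h2 : a < i) :
    F i j (a, b) = (a, i) := by simp [F, hb, ha, h, h2]
lemma F4 {i j a b : Fin n} (hb : b ≠ i) (ha : a ≠ j) (h : ¬(b = j ∧ a < i))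
    (h4 : a = i) (h5 : j < b) : F i j (a, b) = (j, b) := by simp [F, hb, ha, h, h4, h5]
lemma F5 {i j a b : Fin n} (hb : b ≠ i) (ha : a ≠ j) (h : ¬(b = j ∧ a < i))
    (h4 : ¬(a = i ∧ j < b)) : F i j (a, b) = (a, b) := by simp [F, hb, ha, h, h4]

lemma hF_spec (u : Equiv.Perm (Fin n)) {i j : Fin n} (hij : i < j) (hinv : u j < u i)
    (hmin : ∀ k, i < k → k < j → u j < u k → ¬ u k < u i)
    (a b : Fin n) (hab : a < b) (hne : (a, b) ≠ (i, j)) :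
    (F i j (a, b)).1 < (F i j (a, b)).2 ∧
    ((u * Equiv.swap i j) b < (u * Equiv.swap i j) a ↔ u (F i j (a, b)).2 < u (F i j (a, b)).1) ∧
    F i j (F i j (a, b)) = (a, b) := by
  have hne' : a ≠ i ∨ b ≠ j := by
    by_contra h; push_neg at h; exact hne (by rw [h.1, h.2])
  by_cases hbi : b = i
  · have hai : a < i := hbi ▸ hab
    have ha : a ≠ i := by omega
    have haj : a ≠ j := by omega
    rw [F1 hbi, F3 (i := i) (j := j) (a := a) (b := j) (by omega) haj rfl hai]
    refine ⟨show a < j by omega, ?_, by rw [hbi]⟩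
    rw [hbi, Equiv.Perm.mul_apply, Equiv.Perm.mul_apply, Equiv.swap_apply_left,
      Equiv.swap_apply_of_ne_of_ne ha haj]
  · by_cases haj : a = j
    · have hjb : j < b := haj ▸ hab
      have hbj : b ≠ j := by omega
      rw [F2 hbi haj, F4 (i := i) (j := j) (a := i) (b := b) hbi (by omega) (by simp [hbj]) rfl hjb]
      refine ⟨show i < b by omega, ?_, by rw [haj]⟩
      rw [haj, Equiv.Perm.mul_apply, Equiv.Perm.mul_apply, Equiv.swap_apply_right,
        Equiv.swap_apply_of_ne_of_ne hbi hbj]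
    · by_cases h3 : b = j ∧ a < i
      · obtain ⟨hbj, hai⟩ := h3
        have ha : a ≠ i := by omega
        rw [F3 hbi haj hbj hai, F1 (i := i) (j := j) (a := a) (b := i) rfl]
        refine ⟨show a < i from hai, ?_, by rw [hbj]⟩
        rw [hbj, Equiv.Perm.mul_apply, Equiv.Perm.mul_apply, Equiv.swap_apply_right,
          Equiv.swap_apply_of_ne_of_ne ha haj]
      · by_cases h4 : a = i ∧ j < b
        · obtain ⟨hai, hjb⟩ := h4
          have hbj : b ≠ j := by omega
          rw [F4 hbi haj h3 hai hjb, F2 (i := i) (j := j) (a := j) (b := b) hbi rfl]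
          refine ⟨show j < b from hjb, ?_, by rw [hai]⟩
          rw [hai, Equiv.Perm.mul_apply, Equiv.Perm.mul_apply, Equiv.swap_apply_left,
            Equiv.swap_apply_of_ne_of_ne hbi hbj]
        · rw [F5 hbi haj h3 h4, F5 hbi haj h3 h4]
          refine ⟨hab, ?_, rfl⟩
          by_cases hai : a = i
          · have hbj : b ≠ j := Or.resolve_left hne' (fun hh => hh hai)
            have hbj' : b < j := by simp [hai] at h4; omega
            have hib : i < b := by omega
            rw [hai, Equiv.Perm.mul_apply, Equiv.Perm.mul_apply, Equiv.swap_apply_left,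
              Equiv.swap_apply_of_ne_of_ne hbi hbj]
            constructor
            · intro h; exact h.trans hinv
            · intro h
              have hne2 : u b ≠ u j := u.injective.ne hbj
              rcases lt_or_gt_of_ne hne2 with h' | h'
              · exact h'
              · exact absurd h (hmin b hib hbj' h')
          · by_cases hbj : b = j
            · have hia : i < a := by simp [hbj] at h3; omega
              have haj' : a < j := hbj ▸ hab
              rw [hbj, Equiv.Perm.mul_apply, Equiv.Perm.mul_apply, Equiv.swap_apply_right,
                Equiv.swap_apply_of_ne_of_ne hai haj]
              constructor
              · intro h; exact hinv.trans h
              · intro h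
                have hne2 : u a ≠ u i := u.injective.ne hai
                rcases lt_or_gt_of_ne hne2 with h' | h'
                · exact absurd h' (hmin a hia haj' h)
                · exact h'
            · rw [Equiv.Perm.mul_apply, Equiv.Perm.mul_apply,
                Equiv.swap_apply_of_ne_of_ne hbi hbj, Equiv.swap_apply_of_ne_of_ne hai haj]

end SGAux

namespace SGAux

variable {n : ℕ}

lemma Ffix {i j : Fin n} (hij : i < j) : F i j (i, j) = (i, j) :=
  F5 (by omega) (by omega) (by simp) (by simp)

lemma len_swap (u : Equiv.Perm (Fin n)) {i j : Fin n} (hij : i < j) (hinv : u j < u i)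
    (hmin : ∀ k, i < k → k < j → u j < u k → ¬ u k < u i) :
    len (u * Equiv.swap i j) + 1 = len u := by
  classical
  set u' := u * Equiv.swap i j with hu'
  set S : Set (Fin n × Fin n) := {p | p.1 < p.2 ∧ u p.2 < u p.1} with hS0
  set S' : Set (Fin n × Fin n) := {p | p.1 < p.2 ∧ u' p.2 < u' p.1} with hS0'
  have hu'i : u' i = u j := by simp [hu', Equiv.Perm.mul_apply]
  have hu'j : u' j = u i := by simp [hu', Equiv.Perm.mul_apply]
  have hijS : (i, j) ∈ S := ⟨hij, hinv⟩
  have hijS' : (i, j) ∉ S' := by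
    rintro ⟨-, h⟩
    simp only [hu'i, hu'j] at h
    exact absurd (h.trans hinv) (lt_irrefl _)
  have key : ∀ p ∈ S', F i j p ∈ S ∧ F i j (F i j p) = p ∧ F i j p ≠ (i, j) := by
    rintro ⟨a, b⟩ ⟨hab, hord⟩
    have hne : (a, b) ≠ (i, j) := fun h => hijS' (h ▸ ⟨hab, hord⟩)
    obtain ⟨hlt, hiff, hinvol⟩ := hF_spec u hij hinv hmin a b hab hne
    refine ⟨⟨hlt, hiff.mp hord⟩, hinvol, ?_⟩
    intro h
    rw [h, Ffix hij] at hinvol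
    exact hne hinvol.symm
  have key2 : ∀ p ∈ S, p ≠ (i, j) → p ∈ F i j '' S' := by
    rintro ⟨a, b⟩ ⟨hab, hord⟩ hne
    obtain ⟨hlt, -, hinvol⟩ := hF_spec u hij hinv hmin a b hab hne
    set q := F i j (a, b) with hq
    have hqne : q ≠ (i, j) := by
      intro h; rw [h, Ffix hij] at hinvol; exact hne hinvol.symm
    obtain ⟨hlt', hiff', hinvol'⟩ := hF_spec u hij hinv hmin q.1 q.2 hlt hqne
    rw [Prod.mk.eta] at hiff' hinvol'
    refine ⟨q, ⟨hlt, hiff'.mpr (by rw [hinvol]; exact hord)⟩, hinvol⟩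
  have hinj : Set.InjOn (F i j) S' := by
    intro p hp q hq h
    have := (key p hp).2.1
    rw [h, (key q hq).2.1] at this
    exact this.symm
  have hnm : (i, j) ∉ F i j '' S' := by
    rintro ⟨q, hq, h⟩
    exact (key q hq).2.2 h
  have hSeq : S = insert (i, j) (F i j '' S') := by
    ext p
    constructor
    · intro hp
      by_cases h : p = (i, j)
      · exact h ▸ Set.mem_insert _ _
      · exact Set.mem_insert_of_mem _ (key2 p hp h)
    · rintro (h | ⟨q, hq, h⟩)
      · exact h ▸ hijS
      · exact h ▸ (key q hq).1
  have h1 : len u = S.ncard := rfl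
  have h2 : len u' = S'.ncard := rfl
  rw [h1, h2, hSeq, Set.ncard_insert_of_notMem hnm, Set.ncard_image_of_injOn hinj]

/-- A minimal inversion gives a covering. -/
lemma covers_swap (u : Equiv.Perm (Fin n)) {i j : Fin n} (h : MinimalInversion u i j) :
    covers (u * Equiv.swap i j) u := by
  obtain ⟨hij, hinv, hmin⟩ := h
  push_neg at hmin
  have hlen := len_swap u hij hinv (fun k h1 h2 h3 => not_lt.mpr (hmin k h1 h2 h3))
  refine ⟨Relation.ReflTransGen.single ?_, hlen⟩
  exact ⟨⟨i, j, ne_of_lt hij, by ext x : 1; simp only [Equiv.Perm.mul_apply, Equiv.swap_apply_def]; split_ifs <;> simp_all <;> omega⟩, by omega⟩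

lemma le_swap (u : Equiv.Perm (Fin n)) {i j : Fin n} (h : MinimalInversion u i j) :
    le (u * Equiv.swap i j) u := (covers_swap u h).1

end SGAux

namespace SGAux

variable {n : ℕ}

lemma ms_left (w : Equiv.Perm (Fin n)) (i j : Fin n) : (w * Equiv.swap i j) i = w j := by
  simp [Equiv.Perm.mul_apply]

lemma ms_right (w : Equiv.Perm (Fin n)) (i j : Fin n) : (w * Equiv.swap i j) j = w i := by
  simp [Equiv.Perm.mul_apply]

lemma ms_other (w : Equiv.Perm (Fin n)) {i j x : Fin n} (h1 : x ≠ i) (h2 : x ≠ j) :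
    (w * Equiv.swap i j) x = w x := by
  simp [Equiv.Perm.mul_apply, Equiv.swap_apply_of_ne_of_ne h1 h2]

lemma build (w : Equiv.Perm (Fin n)) {i₁ j₁ i₂ j₂ a₁ b₁ a₂ b₂ : Fin n}
    (hm1 : MinimalInversion w i₁ j₁) (hm2 : MinimalInversion w i₂ j₂)
    (h1 : MinimalInversion (w * Equiv.swap i₁ j₁) a₁ b₁)
    (h2 : MinimalInversion (w * Equiv.swap i₂ j₂) a₂ b₂)
    (he : (w * Equiv.swap i₁ j₁) * Equiv.swap a₁ b₁ =
          (w * Equiv.swap i₂ j₂) * Equiv.swap a₂ b₂) :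
    ∃ v : Equiv.Perm (Fin n), le v w ∧
      covers v (w * Equiv.swap i₁ j₁) ∧ covers v (w * Equiv.swap i₂ j₂) := by
  refine ⟨(w * Equiv.swap i₁ j₁) * Equiv.swap a₁ b₁, ?_, ?_, ?_⟩
  · exact Relation.ReflTransGen.trans (le_swap _ h1) (le_swap w hm1)
  · exact covers_swap _ h1
  · rw [he]; exact covers_swap _ h2

lemma pat3412 {w : Equiv.Perm (Fin n)} (h : Avoids w ![3, 4, 1, 2]) {a b c d : Fin n}
    (hab : a < b) (hbc : b < c) (hcd : c < d)
    (v1 : w c < w d) (v2 : w d < w a) (v3 : w a < w b) : False := by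
  apply h
  refine ⟨![a, b, c, d], ?_, ?_⟩
  · intro x y hxy
    fin_cases x <;> fin_cases y <;> simp_all <;> omega
  · intro x y
    fin_cases x <;> fin_cases y <;> simp <;> omega

lemma pat4231 {w : Equiv.Perm (Fin n)} (h : Avoids w ![4, 2, 3, 1]) {a b c d : Fin n}
    (hab : a < b) (hbc : b < c) (hcd : c < d)
    (v1 : w d < w b) (v2 : w b < w c) (v3 : w c < w a) : False := by
  apply h
  refine ⟨![a, b, c, d], ?_, ?_⟩
  · intro x y hxy
    fin_cases x <;> fin_cases y <;> simp_all <;> omega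
  · intro x y
    fin_cases x <;> fin_cases y <;> simp <;> omega

-- swap identities
lemma swapA {i j₁ j₂ : Fin n} (h1 : i < j₁) (h2 : j₁ < j₂) :
    Equiv.swap i j₁ * Equiv.swap j₁ j₂ = Equiv.swap i j₂ * Equiv.swap i j₁ := by
  ext x : 1
  simp only [Equiv.Perm.mul_apply, Equiv.swap_apply_def]
  split_ifs <;> omega

lemma swapB1 {i₁ j₁ j₂ : Fin n} (h1 : i₁ < j₁) (h2 : j₁ < j₂) :
    Equiv.swap i₁ j₁ * Equiv.swap j₁ j₂ = Equiv.swap j₁ j₂ * Equiv.swap i₁ j₂ := by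
  ext x : 1
  simp only [Equiv.Perm.mul_apply, Equiv.swap_apply_def]
  split_ifs <;> omega

lemma swapB2 {i₁ j₁ j₂ : Fin n} (h1 : i₁ < j₁) (h2 : j₁ < j₂) :
    Equiv.swap i₁ j₁ * Equiv.swap i₁ j₂ = Equiv.swap j₁ j₂ * Equiv.swap i₁ j₁ := by
  ext x : 1
  simp only [Equiv.Perm.mul_apply, Equiv.swap_apply_def]
  split_ifs <;> omega

lemma swapC1 {i₁ i₂ j : Fin n} (h1 : i₁ < i₂) (h2 : i₂ < j) :
    Equiv.swap i₁ j * Equiv.swap i₂ j = Equiv.swap i₂ j * Equiv.swap i₁ i₂ := by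
  ext x : 1
  simp only [Equiv.Perm.mul_apply, Equiv.swap_apply_def]
  split_ifs <;> omega

lemma swapD {i₁ j₁ i₂ j₂ : Fin n} (h1 : i₁ ≠ i₂) (h2 : i₁ ≠ j₂) (h3 : j₁ ≠ i₂) (h4 : j₁ ≠ j₂) :
    Equiv.swap i₁ j₁ * Equiv.swap i₂ j₂ = Equiv.swap i₂ j₂ * Equiv.swap i₁ j₁ := by
  ext x : 1
  simp only [Equiv.Perm.mul_apply, Equiv.swap_apply_def]
  split_ifs <;> omega

end SGAux

namespace SGAux

variable {n : ℕ}

lemma main (w : Equiv.Perm (Fin n))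
    (h1 : Avoids w ![3, 4, 1, 2]) (h2 : Avoids w ![4, 2, 3, 1])
    (i₁ j₁ i₂ j₂ : Fin n)
    (hm1 : MinimalInversion w i₁ j₁) (hm2 : MinimalInversion w i₂ j₂)
    (hlex : i₁ < i₂ ∨ (i₁ = i₂ ∧ j₁ < j₂)) :
    ∃ v : Equiv.Perm (Fin n), le v w ∧
      covers v (w * Equiv.swap i₁ j₁) ∧ covers v (w * Equiv.swap i₂ j₂) := by
  obtain ⟨hlt1, hv1, hmin1⟩ := hm1
  obtain ⟨hlt2, hv2, hmin2⟩ := hm2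
  push_neg at hmin1 hmin2
  have hm1' : MinimalInversion w i₁ j₁ := ⟨hlt1, hv1, by push_neg; exact hmin1⟩
  have hm2' : MinimalInversion w i₂ j₂ := ⟨hlt2, hv2, by push_neg; exact hmin2⟩
  rcases hlex with hii | ⟨rfl, hjj⟩
  · rcases lt_trichotomy j₁ i₂ with hd | hd | hd
    · -- Case D : i₁ < j₁ < i₂ < j₂
      refine build w (a₁ := i₂) (b₁ := j₂) (a₂ := i₁) (b₂ := j₁) hm1' hm2' ?_ ?_ ?_
      · refine ⟨hlt2, ?_, ?_⟩
        · rw [ms_other w (show i₂ ≠ i₁ by omega) (show i₂ ≠ j₁ by omega),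
            ms_other w (show j₂ ≠ i₁ by omega) (show j₂ ≠ j₁ by omega)]
          exact hv2
        · rintro ⟨k, hk1, hk2, hk3, hk4⟩
          rw [ms_other w (show k ≠ i₁ by omega) (show k ≠ j₁ by omega),
            ms_other w (show j₂ ≠ i₁ by omega) (show j₂ ≠ j₁ by omega)] at hk3
          rw [ms_other w (show k ≠ i₁ by omega) (show k ≠ j₁ by omega),
            ms_other w (show i₂ ≠ i₁ by omega) (show i₂ ≠ j₁ by omega)] at hk4
          have := hmin2 k hk1 hk2 hk3; omega
      · refine ⟨hlt1, ?_, ?_⟩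
        · rw [ms_other w (show i₁ ≠ i₂ by omega) (show i₁ ≠ j₂ by omega),
            ms_other w (show j₁ ≠ i₂ by omega) (show j₁ ≠ j₂ by omega)]
          exact hv1
        · rintro ⟨k, hk1, hk2, hk3, hk4⟩
          rw [ms_other w (show k ≠ i₂ by omega) (show k ≠ j₂ by omega),
            ms_other w (show j₁ ≠ i₂ by omega) (show j₁ ≠ j₂ by omega)] at hk3
          rw [ms_other w (show k ≠ i₂ by omega) (show k ≠ j₂ by omega),
            ms_other w (show i₁ ≠ i₂ by omega) (show i₁ ≠ j₂ by omega)] at hk4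
          have := hmin1 k hk1 hk2 hk3; omega
      · rw [mul_assoc, mul_assoc,
          swapD (show i₁ ≠ i₂ by omega) (show i₁ ≠ j₂ by omega)
            (show j₁ ≠ i₂ by omega) (show j₁ ≠ j₂ by omega)]
    · -- Case B : i₁ < j₁ = i₂ < j₂
      subst hd
      by_cases hA : ∃ k, j₁ < k ∧ k < j₂ ∧ w j₁ < w k ∧ w k < w i₁
      · obtain ⟨a, ha1, ha2, ha3, ha4⟩ := hA
        have hB' : ∀ k, i₁ < k → k < j₁ → w j₂ < w k → w j₁ ≤ w k := by
          intro k hk1 hk2 hk3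
          by_contra hcon; push_neg at hcon
          exact pat4231 h2 hk1 (show k < a by omega) ha2 hk3 (show w k < w a by omega) ha4
        refine build w (a₁ := i₁) (b₁ := j₂) (a₂ := i₁) (b₂ := j₁) hm1' hm2' ?_ ?_ ?_
        · -- MinInv (w * swap i₁ j₁) i₁ j₂
          refine ⟨show i₁ < j₂ by omega, ?_, ?_⟩
          · rw [ms_left, ms_other w (show j₂ ≠ i₁ by omega) (show j₂ ≠ j₁ by omega)]
            exact hv2
          · rintro ⟨k, hk1, hk2, hk3, hk4⟩
            rw [ms_other w (show j₂ ≠ i₁ by omega) (show j₂ ≠ j₁ by omega)] at hk3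
            rw [ms_left] at hk4
            by_cases hkj : k = j₁
            · rw [hkj, ms_right] at hk4; omega
            · rw [ms_other w (show k ≠ i₁ by omega) hkj] at hk3 hk4
              rcases lt_or_gt_of_ne hkj with h' | h'
              · have := hB' k hk1 h' hk3; omega
              · have := hmin2 k h' hk2 hk3; omega
        · -- MinInv (w * swap j₁ j₂) i₁ j₁
          refine ⟨hlt1, ?_, ?_⟩
          · rw [ms_left, ms_other w (show i₁ ≠ j₁ by omega) (show i₁ ≠ j₂ by omega)]
            omega
          · rintro ⟨k, hk1, hk2, hk3, hk4⟩
            rw [ms_left, ms_other w (show k ≠ j₁ by omega) (show k ≠ j₂ by omega)] at hk3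
            rw [ms_other w (show k ≠ j₁ by omega) (show k ≠ j₂ by omega),
              ms_other w (show i₁ ≠ j₁ by omega) (show i₁ ≠ j₂ by omega)] at hk4
            have hne := w.injective.ne (show k ≠ j₁ by omega)
            rcases lt_or_gt_of_ne hne with h' | h'
            · have := hB' k hk1 hk2 hk3; omega
            · have := hmin1 k hk1 hk2 h'; omega
        · rw [mul_assoc, mul_assoc, swapB2 hlt1 hlt2]
      · push_neg at hA
        refine build w (a₁ := j₁) (b₁ := j₂) (a₂ := i₁) (b₂ := j₂) hm1' hm2' ?_ ?_ ?_
        · -- MinInv (w * swap i₁ j₁) j₁ j₂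
          refine ⟨hlt2, ?_, ?_⟩
          · rw [ms_right, ms_other w (show j₂ ≠ i₁ by omega) (show j₂ ≠ j₁ by omega)]
            omega
          · rintro ⟨k, hk1, hk2, hk3, hk4⟩
            rw [ms_other w (show k ≠ i₁ by omega) (show k ≠ j₁ by omega),
              ms_other w (show j₂ ≠ i₁ by omega) (show j₂ ≠ j₁ by omega)] at hk3
            rw [ms_right, ms_other w (show k ≠ i₁ by omega) (show k ≠ j₁ by omega)] at hk4
            have hne := w.injective.ne (show k ≠ j₁ by omega)
            rcases lt_or_gt_of_ne hne with h' | h'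
            · have := hmin2 k hk1 hk2 hk3; omega
            · have := hA k hk1 hk2 h'; omega
        · -- MinInv (w * swap j₁ j₂) i₁ j₂
          refine ⟨show i₁ < j₂ by omega, ?_, ?_⟩
          · rw [ms_right, ms_other w (show i₁ ≠ j₁ by omega) (show i₁ ≠ j₂ by omega)]
            exact hv1
          · rintro ⟨k, hk1, hk2, hk3, hk4⟩
            rw [ms_right] at hk3
            rw [ms_other w (show i₁ ≠ j₁ by omega) (show i₁ ≠ j₂ by omega)] at hk4
            by_cases hkj : k = j₁
            · rw [hkj, ms_left] at hk3; omega
            · rw [ms_other w hkj (show k ≠ j₂ by omega)] at hk3 hk4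
              rcases lt_or_gt_of_ne hkj with h' | h'
              · have := hmin1 k hk1 h' hk3; omega
              · have := hA k h' hk2 hk3; omega
        · rw [mul_assoc, mul_assoc, swapB1 hlt1 hlt2]
    · rcases lt_trichotomy j₂ j₁ with hc | hc | hc
      · -- Case C2 : i₁ < i₂ < j₂ < j₁
        refine build w (a₁ := i₂) (b₁ := j₂) (a₂ := i₁) (b₂ := j₁) hm1' hm2' ?_ ?_ ?_
        · refine ⟨hlt2, ?_, ?_⟩
          · rw [ms_other w (show i₂ ≠ i₁ by omega) (show i₂ ≠ j₁ by omega),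
              ms_other w (show j₂ ≠ i₁ by omega) (show j₂ ≠ j₁ by omega)]
            exact hv2
          · rintro ⟨k, hk1, hk2, hk3, hk4⟩
            rw [ms_other w (show k ≠ i₁ by omega) (show k ≠ j₁ by omega),
              ms_other w (show j₂ ≠ i₁ by omega) (show j₂ ≠ j₁ by omega)] at hk3
            rw [ms_other w (show k ≠ i₁ by omega) (show k ≠ j₁ by omega),
              ms_other w (show i₂ ≠ i₁ by omega) (show i₂ ≠ j₁ by omega)] at hk4
            have := hmin2 k hk1 hk2 hk3; omega
        · refine ⟨hlt1, ?_, ?_⟩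
          · rw [ms_other w (show i₁ ≠ i₂ by omega) (show i₁ ≠ j₂ by omega),
              ms_other w (show j₁ ≠ i₂ by omega) (show j₁ ≠ j₂ by omega)]
            exact hv1
          · rintro ⟨k, hk1, hk2, hk3, hk4⟩
            rw [ms_other w (show j₁ ≠ i₂ by omega) (show j₁ ≠ j₂ by omega)] at hk3
            rw [ms_other w (show i₁ ≠ i₂ by omega) (show i₁ ≠ j₂ by omega)] at hk4
            by_cases hk5 : k = i₂
            · rw [hk5, ms_left] at hk3 hk4
              have := hmin1 j₂ (show i₁ < j₂ by omega) hc hk3; omega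
            · by_cases hk6 : k = j₂
              · rw [hk6, ms_right] at hk3 hk4
                have := hmin1 i₂ hii hd hk3; omega
              · rw [ms_other w hk5 hk6] at hk3 hk4
                have := hmin1 k hk1 hk2 hk3; omega
        · rw [mul_assoc, mul_assoc,
            swapD (show i₁ ≠ i₂ by omega) (show i₁ ≠ j₂ by omega)
              (show j₁ ≠ i₂ by omega) (show j₁ ≠ j₂ by omega)]
      · -- Case C1 : i₁ < i₂ < j₁ = j₂
        subst hc
        have hne := w.injective.ne (show i₁ ≠ i₂ by omega)
        have hw : w i₁ < w i₂ := by
          have := hmin1 i₂ hii hd hv2; omega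
        refine build w (a₁ := i₂) (b₁ := j₂) (a₂ := i₁) (b₂ := i₂) hm1' hm2' ?_ ?_ ?_
        · -- MinInv (w * swap i₁ j₂) i₂ j₂
          refine ⟨hd, ?_, ?_⟩
          · rw [ms_right, ms_other w (show i₂ ≠ i₁ by omega) (show i₂ ≠ j₂ by omega)]
            exact hw
          · rintro ⟨k, hk1, hk2, hk3, hk4⟩
            rw [ms_right, ms_other w (show k ≠ i₁ by omega) (show k ≠ j₂ by omega)] at hk3
            rw [ms_other w (show k ≠ i₁ by omega) (show k ≠ j₂ by omega),
              ms_other w (show i₂ ≠ i₁ by omega) (show i₂ ≠ j₂ by omega)] at hk4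
            have := hmin2 k hk1 hk2 (show w j₂ < w k by omega); omega
        · -- MinInv (w * swap i₂ j₂) i₁ i₂
          refine ⟨hii, ?_, ?_⟩
          · rw [ms_left, ms_other w (show i₁ ≠ i₂ by omega) (show i₁ ≠ j₂ by omega)]
            exact hv1
          · rintro ⟨k, hk1, hk2, hk3, hk4⟩
            rw [ms_left, ms_other w (show k ≠ i₂ by omega) (show k ≠ j₂ by omega)] at hk3
            rw [ms_other w (show k ≠ i₂ by omega) (show k ≠ j₂ by omega),
              ms_other w (show i₁ ≠ i₂ by omega) (show i₁ ≠ j₂ by omega)] at hk4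
            have := hmin1 k hk1 (show k < j₂ by omega) hk3; omega
        · rw [mul_assoc, mul_assoc, swapC1 hii hd]
      · -- Case C3 : i₁ < i₂ < j₁ < j₂
        refine build w (a₁ := i₂) (b₁ := j₂) (a₂ := i₁) (b₂ := j₁) hm1' hm2' ?_ ?_ ?_
        · -- MinInv (w * swap i₁ j₁) i₂ j₂
          refine ⟨hlt2, ?_, ?_⟩
          · rw [ms_other w (show i₂ ≠ i₁ by omega) (show i₂ ≠ j₁ by omega),
              ms_other w (show j₂ ≠ i₁ by omega) (show j₂ ≠ j₁ by omega)]
            exact hv2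
          · rintro ⟨k, hk1, hk2, hk3, hk4⟩
            rw [ms_other w (show j₂ ≠ i₁ by omega) (show j₂ ≠ j₁ by omega)] at hk3
            rw [ms_other w (show i₂ ≠ i₁ by omega) (show i₂ ≠ j₁ by omega)] at hk4
            by_cases hkj : k = j₁
            · rw [hkj, ms_right] at hk3 hk4
              have hw12 : w j₁ < w j₂ := by
                have hne := w.injective.ne (show j₁ ≠ j₂ by omega)
                by_contra hcon; push_neg at hcon
                have := hmin2 j₁ hd hc (show w j₂ < w j₁ by omega); omega
              exact pat3412 h1 hii hd hc hw12 hk3 hk4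
            · rw [ms_other w (show k ≠ i₁ by omega) hkj] at hk3 hk4
              have := hmin2 k hk1 hk2 hk3; omega
        · -- MinInv (w * swap i₂ j₂) i₁ j₁
          refine ⟨hlt1, ?_, ?_⟩
          · rw [ms_other w (show i₁ ≠ i₂ by omega) (show i₁ ≠ j₂ by omega),
              ms_other w (show j₁ ≠ i₂ by omega) (show j₁ ≠ j₂ by omega)]
            exact hv1
          · rintro ⟨k, hk1, hk2, hk3, hk4⟩
            rw [ms_other w (show j₁ ≠ i₂ by omega) (show j₁ ≠ j₂ by omega)] at hk3
            rw [ms_other w (show i₁ ≠ i₂ by omega) (show i₁ ≠ j₂ by omega)] at hk4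
            by_cases hki : k = i₂
            · rw [hki, ms_left] at hk3 hk4
              have hw : w i₁ < w i₂ := by
                have hne := w.injective.ne (show i₁ ≠ i₂ by omega)
                have := hmin1 i₂ hii hd (show w j₁ < w i₂ by omega); omega
              exact pat3412 h1 hii hd hc hk3 hk4 hw
            · rw [ms_other w hki (show k ≠ j₂ by omega)] at hk3 hk4
              have := hmin1 k hk1 hk2 hk3; omega
        · rw [mul_assoc, mul_assoc,
            swapD (show i₁ ≠ i₂ by omega) (show i₁ ≠ j₂ by omega)
              (show j₁ ≠ i₂ by omega) (show j₁ ≠ j₂ by omega)]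
  · -- Case A : i₁ = i₂, j₁ < j₂
    have hw12 : w j₁ < w j₂ := by
      have hne := w.injective.ne (show j₁ ≠ j₂ by omega)
      by_contra hcon; push_neg at hcon
      have := hmin2 j₁ hlt1 hjj (show w j₂ < w j₁ by omega); omega
    refine build w (a₁ := j₁) (b₁ := j₂) (a₂ := i₁) (b₂ := j₁) hm1' hm2' ?_ ?_ ?_
    · -- MinInv (w * swap i₁ j₁) j₁ j₂
      refine ⟨hjj, ?_, ?_⟩
      · rw [ms_right, ms_other w (show j₂ ≠ i₁ by omega) (show j₂ ≠ j₁ by omega)]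
        exact hv2
      · rintro ⟨k, hk1, hk2, hk3, hk4⟩
        rw [ms_other w (show k ≠ i₁ by omega) (show k ≠ j₁ by omega),
          ms_other w (show j₂ ≠ i₁ by omega) (show j₂ ≠ j₁ by omega)] at hk3
        rw [ms_right, ms_other w (show k ≠ i₁ by omega) (show k ≠ j₁ by omega)] at hk4
        have := hmin2 k (show i₁ < k by omega) hk2 hk3; omega
    · -- MinInv (w * swap i₁ j₂) i₁ j₁
      refine ⟨hlt1, ?_, ?_⟩
      · rw [ms_left, ms_other w (show j₁ ≠ i₁ by omega) (show j₁ ≠ j₂ by omega)]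
        exact hw12
      · rintro ⟨k, hk1, hk2, hk3, hk4⟩
        rw [ms_other w (show k ≠ i₁ by omega) (show k ≠ j₂ by omega),
          ms_other w (show j₁ ≠ i₁ by omega) (show j₁ ≠ j₂ by omega)] at hk3
        rw [ms_left, ms_other w (show k ≠ i₁ by omega) (show k ≠ j₂ by omega)] at hk4
        have := hmin1 k hk1 hk2 hk3; omega
    · rw [mul_assoc, mul_assoc, swapA hlt1 hjj]

end SGAux

theorem stmt16 {n : ℕ} (w : Equiv.Perm (Fin n))
    (h1 : Avoids w ![3, 4, 1, 2]) (h2 : Avoids w ![4, 2, 3, 1])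
    (i₁ j₁ i₂ j₂ : Fin n)
    (hm1 : MinimalInversion w i₁ j₁) (hm2 : MinimalInversion w i₂ j₂)
    (hne : (i₁, j₁) ≠ (i₂, j₂)) :
    ∃ v : Equiv.Perm (Fin n), le v w ∧
      covers v (w * Equiv.swap i₁ j₁) ∧ covers v (w * Equiv.swap i₂ j₂) := by
  rcases lt_trichotomy i₁ i₂ with h | h | h
  · exact SGAux.main w h1 h2 i₁ j₁ i₂ j₂ hm1 hm2 (Or.inl h)
  · rcases lt_trichotomy j₁ j₂ with hj | hj | hj
    · exact SGAux.main w h1 h2 i₁ j₁ i₂ j₂ hm1 hm2 (Or.inr ⟨h, hj⟩)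
    · exact absurd (Prod.ext h hj) hne
    · obtain ⟨v, hv, c2, c1⟩ := SGAux.main w h1 h2 i₂ j₂ i₁ j₁ hm2 hm1 (Or.inr ⟨h.symm, hj⟩)
      exact ⟨v, hv, c1, c2⟩
  · obtain ⟨v, hv, c2, c1⟩ := SGAux.main w h1 h2 i₂ j₂ i₁ j₁ hm2 hm1 (Or.inl h)
    exact ⟨v, hv, c1, c2⟩
end
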